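/- Let M>0, H∈ℝ, c₁ > -8M³H. Let f₁ satisfy f₁'(r)=(l₁(r)/h(r))·√(1/(1+l₁(r)²)) near r=2M (h, l₁ as usual). Then f₁(r) → -∞ as r → 2M⁺, and moreover there exist constants C₃, C₄ such that (r+2M·ln(r-2M)) + C₄ ≤ f₁(r) ≤ (r+2M·ln(r-2M)) + C₃ + C₄ for r near 2M. -/

import Mathlib

/-!
Write `h = 1 - 2M/r` and `a = Hr + c₁/r²`. The prescribed slope simplifies to
`a / (h √(h + a²))`, while `1/h` is the derivative of the tortoise coordinate
`r + 2M log (r - 2M)`; their difference is `1 / (√(h + a²) (√(h + a²) + a)) ≤ 1 / (2a²)`.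
The hypothesis `c₁ > -8M³H` says exactly that `a(2M) > 0`, so near the horizon `a` stays
bounded below and `f₁` minus the tortoise coordinate has bounded derivative on a bounded
interval, hence is bounded. Since the tortoise coordinate tends to `-∞` at `2M`, so does `f₁`.
-/

open Real Set Filter Topology

/-- `(l / h) √(1 / (1 + l²))` with `l = a / √h`; the theorem has `h = 1 - 2M/r` and
`a = Hr + c₁/r²`. -/
noncomputable def cmcSlope (h a : ℝ) : ℝ :=
  1 / √h * a / h * √(1 / (1 + (1 / √h * a) ^ 2))

noncomputable def tortoise (M r : ℝ) : ℝ := r + 2 * M * log (r - 2 * M)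

lemma cmcSlope_eq {h : ℝ} (hh : 0 < h) (a : ℝ) : cmcSlope h a = a / (h * √(h + a ^ 2)) := by
  have hsq : √h ^ 2 = h := sq_sqrt hh.le
  have : 1 / (1 + (1 / √h * a) ^ 2) = h / (h + a ^ 2) := by
    field_simp
    rw [hsq]
    ring
  rw [cmcSlope, this, sqrt_div hh.le]
  field_simp

lemma inv_sub_cmcSlope {h a : ℝ} (hh : 0 < h) (ha : 0 ≤ a) :
    h⁻¹ - cmcSlope h a = 1 / (√(h + a ^ 2) * (√(h + a ^ 2) + a)) := by
  have hsq : √(h + a ^ 2) ^ 2 = h + a ^ 2 := sq_sqrt (by positivity)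
  rw [cmcSlope_eq hh]
  field_simp
  linear_combination hsq

lemma abs_cmcSlope_sub_inv_le {h a : ℝ} (hh : 0 < h) (ha : 0 < a) :
    |cmcSlope h a - h⁻¹| ≤ 1 / (2 * a ^ 2) := by
  have hs : a ≤ √(h + a ^ 2) := le_sqrt_of_sq_le (by linarith)
  rw [abs_sub_comm, inv_sub_cmcSlope hh ha.le, abs_of_pos (by positivity)]
  exact one_div_le_one_div_of_le (by positivity) (by nlinarith)

lemma hasDerivAt_tortoise {M r : ℝ} (hr₀ : r ≠ 0) (hr : r ≠ 2 * M) :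
    HasDerivAt (tortoise M) (1 - 2 * M / r)⁻¹ r := by
  have hr' : r - 2 * M ≠ 0 := sub_ne_zero.2 hr
  have hinv : (1 - 2 * M / r)⁻¹ = 1 + 2 * M * (1 / (r - 2 * M)) := by
    field_simp
    ring
  rw [hinv]
  exact (hasDerivAt_id' r).add
    ((((hasDerivAt_id' r).sub_const (2 * M)).log hr').const_mul (2 * M))

lemma tendsto_tortoise_atBot {M : ℝ} (hM : 0 < M) :
    Tendsto (tortoise M) (𝓝[>] (2 * M)) atBot := by
  have hlog : Tendsto (fun r => log (r - 2 * M)) (𝓝[>] (2 * M)) atBot := by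
    refine tendsto_log_nhdsGT_zero.comp ?_
    refine tendsto_nhdsWithin_iff.2
      ⟨?_, eventually_nhdsWithin_of_forall fun r hr => mem_Ioi.2 (sub_pos.2 hr)⟩
    simpa using ((continuous_sub_right (2 * M)).tendsto (2 * M)).mono_left nhdsWithin_le_nhds
  exact (tendsto_nhdsWithin_of_tendsto_nhds tendsto_id).add_atBot
    (hlog.const_mul_atBot (by positivity))

lemma exists_norm_le_of_norm_deriv_le {E : Type*} [NormedAddCommGroup E] [NormedSpace ℝ E]
    {φ φ' : ℝ → E} {a b K : ℝ} (hφ : ∀ x ∈ Ioo a b, HasDerivAt φ (φ' x) x)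
    (hK : ∀ x ∈ Ioo a b, ‖φ' x‖ ≤ K) : ∃ C, ∀ x ∈ Ioo a b, ‖φ x‖ ≤ C := by
  rcases (Ioo a b).eq_empty_or_nonempty with hs | ⟨x₀, hx₀⟩
  · exact ⟨0, by simp [hs]⟩
  refine ⟨‖φ x₀‖ + K * (b - a), fun x hx => ?_⟩
  have hmvt : ‖φ x - φ x₀‖ ≤ K * ‖x - x₀‖ :=
    (convex_Ioo a b).norm_image_sub_le_of_norm_hasDerivWithin_le
      (fun y hy => (hφ y hy).hasDerivWithinAt) hK hx₀ hx
  have hdist : ‖x - x₀‖ ≤ b - a := by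
    rw [Real.norm_eq_abs, abs_le]
    constructor <;> linarith [hx.1, hx.2, hx₀.1, hx₀.2]
  have hK₀ : 0 ≤ K := (norm_nonneg _).trans (hK x₀ hx₀)
  calc ‖φ x‖ ≤ ‖φ x₀‖ + ‖φ x - φ x₀‖ := norm_le_norm_add_norm_sub' ..
    _ ≤ ‖φ x₀‖ + K * (b - a) := by gcongr; exact hmvt.trans (by gcongr)

lemma exists_abs_sub_tortoise_le {M δ a₀ : ℝ} {f a : ℝ → ℝ} (hM : 0 ≤ M) (ha₀ : 0 < a₀)
    (ha : ∀ r ∈ Ioo (2 * M) (2 * M + δ), a₀ ≤ a r)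
    (hf : ∀ r ∈ Ioo (2 * M) (2 * M + δ), HasDerivAt f (cmcSlope (1 - 2 * M / r) (a r)) r) :
    ∃ C, ∀ r ∈ Ioo (2 * M) (2 * M + δ), |f r - tortoise M r| ≤ C := by
  have hr₀ {r : ℝ} (hr : r ∈ Ioo (2 * M) (2 * M + δ)) : 0 < r := by linarith [hr.1]
  refine exists_norm_le_of_norm_deriv_le (φ := f - tortoise M) (K := 1 / (2 * a₀ ^ 2))
    (fun r hr => (hf r hr).sub (hasDerivAt_tortoise (hr₀ hr).ne' hr.1.ne')) fun r hr => ?_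
  have hh : 0 < 1 - 2 * M / r := by rw [sub_pos, div_lt_one (hr₀ hr)]; exact hr.1
  calc |cmcSlope (1 - 2 * M / r) (a r) - (1 - 2 * M / r)⁻¹|
      ≤ 1 / (2 * a r ^ 2) := abs_cmcSlope_sub_inv_le hh (ha₀.trans_le (ha r hr))
    _ ≤ 1 / (2 * a₀ ^ 2) := by gcongr; exact ha r hr

lemma exists_Ioo_forall_of_eventually_nhdsGT {p : ℝ → Prop} {x : ℝ}
    (h : ∀ᶠ y in 𝓝[>] x, p y) : ∃ ε > 0, ∀ y ∈ Ioo x (x + ε), p y := by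
  obtain ⟨u, hu, hsub⟩ := mem_nhdsGT_iff_exists_Ioo_subset.1 h
  exact ⟨u - x, sub_pos.2 hu, fun y hy => hsub (by simpa using hy)⟩

/-- For `c₁ > -8M³H`, a function `f₁` with the SS-CMC slope near the horizon satisfies
`f₁(r) → -∞` as `r → 2M⁺` and is trapped between two null geodesics. -/
theorem stmt_9 (M H c₁ : ℝ) (hM : 0 < M) (hc : c₁ > -8 * M ^ 3 * H) (f₁ : ℝ → ℝ) (δ : ℝ)
    (hδ : 0 < δ)
    (hf : ∀ r ∈ Set.Ioo (2 * M) (2 * M + δ),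
      HasDerivAt f₁
        (((1 / Real.sqrt (1 - 2 * M / r)) * (H * r + c₁ / r ^ 2)) / (1 - 2 * M / r) *
          Real.sqrt (1 / (1 + ((1 / Real.sqrt (1 - 2 * M / r)) * (H * r + c₁ / r ^ 2)) ^ 2))) r) :
    Filter.Tendsto f₁ (nhdsWithin (2 * M) (Set.Ioi (2 * M))) Filter.atBot ∧
    ∃ C₃ C₄ : ℝ, ∃ δ' > (0 : ℝ), ∀ r ∈ Set.Ioo (2 * M) (2 * M + δ'),
      (r + 2 * M * Real.log (r - 2 * M)) + C₄ ≤ f₁ r ∧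
      f₁ r ≤ (r + 2 * M * Real.log (r - 2 * M)) + C₃ + C₄ := by
  set a : ℝ → ℝ := fun r => H * r + c₁ / r ^ 2
  have ha : 0 < a (2 * M) := by
    have : a (2 * M) = (8 * M ^ 3 * H + c₁) / (2 * M) ^ 2 := by
      simp only [a]; field_simp; ring
    rw [this]
    exact div_pos (by linarith) (by positivity)
  have hcont : ContinuousAt a (2 * M) := by
    simp only [a]; fun_prop (disch := positivity)
  obtain ⟨δ', hδ', hδ'a⟩ := exists_Ioo_forall_of_eventually_nhdsGT
    (((hcont.eventually (lt_mem_nhds (half_lt_self ha))).filter_mono nhdsWithin_le_nhds).and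
      (Ioo_mem_nhdsGT (by linarith : 2 * M < 2 * M + δ)))
  obtain ⟨C, hC⟩ := exists_abs_sub_tortoise_le hM.le (half_pos ha)
    (fun r hr => (hδ'a r hr).1.le) (fun r hr => hf r (hδ'a r hr).2)
  have hbounds : ∀ r ∈ Ioo (2 * M) (2 * M + δ'),
      tortoise M r - C ≤ f₁ r ∧ f₁ r ≤ tortoise M r + C :=
    fun r hr => by have := abs_le.1 (hC r hr); constructor <;> linarith
  refine ⟨?_, 2 * C, -C, δ', hδ', fun r hr => ?_⟩
  · refine tendsto_atBot_mono' _ ?_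
      (tendsto_atBot_add_const_right _ C (tendsto_tortoise_atBot hM))
    filter_upwards [Ioo_mem_nhdsGT (by linarith : 2 * M < 2 * M + δ')] with r hr
    exact (hbounds r hr).2
  · have := hbounds r hr
    simp only [tortoise] at this
    constructor <;> linarith
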